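/- (v-adic valuation estimate for restricted power sums; Proposition on ord_v of S̃_i(t), case of integer exponents.) Let f ∈ A be nonzero with deg f < d, and let i ≥ 0, m ≥ 0 be integers. Put P := Σ_{n ∈ A₊, deg n = i, n ≡ f mod v} n^m ∈ A. Then v^N divides P, where N := max(0, (q−1)·Σ_{j=1}^{⌊i/d⌋} (i − jd − 1)), the inner sum being taken in ℤ. In particular the v-adic valuation of the sum of m-th powers of monic polynomials of degree i congruent to f mod v grows quadratically in i. -/

import Mathlib

open Polynomial

/-- The power sum `S_i(-m)`: the sum of `n ^ m` over monic polynomials `n` of degree `i`. -/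
noncomputable def powerSum (F : Type*) [Field F] [Fintype F] (i m : ℕ) : Polynomial F :=
  ∑ᶠ n ∈ {n : Polynomial F | n.Monic ∧ n.natDegree = i}, n ^ m

/-- The restricted power sum `S̃_i(-m)`: the sum of `n ^ m` over monic polynomials `n` of
degree `i` not divisible by `v`. -/
noncomputable def powerSumV (F : Type*) [Field F] [Fintype F] (v : Polynomial F) (i m : ℕ) :
    Polynomial F :=
  ∑ᶠ n ∈ {n : Polynomial F | n.Monic ∧ n.natDegree = i ∧ ¬ v ∣ n}, n ^ m

/-- `ζ_∞(-m_1, …, -m_r)`, the ∞-adic multiple zeta value at nonpositive integers: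
the sum over `i_1 > ⋯ > i_r ≥ 0` of `S_{i_1}(-m_1) ⋯ S_{i_r}(-m_r)`.
Only `m 0, …, m (r-1)` are used.  The depth-0 value is `1`. -/
noncomputable def zetaInf (F : Type*) [Field F] [Fintype F] (r : ℕ) (m : ℕ → ℕ) :
    Polynomial F :=
  ∑ᶠ i ∈ {i : Fin r → ℕ | StrictAnti i}, ∏ j : Fin r, powerSum F (i j) (m (j : ℕ))

/-- `ζ⋆_∞(-m_1, …, -m_r)`, the ∞-adic multiple zeta star value at nonpositive integers:
the sum over `i_1 ≥ ⋯ ≥ i_r ≥ 0` of `S_{i_1}(-m_1) ⋯ S_{i_r}(-m_r)`. -/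
noncomputable def zetaInfStar (F : Type*) [Field F] [Fintype F] (r : ℕ) (m : ℕ → ℕ) :
    Polynomial F :=
  ∑ᶠ i ∈ {i : Fin r → ℕ | Antitone i}, ∏ j : Fin r, powerSum F (i j) (m (j : ℕ))

/-- `ζ_v(-m_1, …, -m_r)`, the v-adic multiple zeta value at nonpositive integers. -/
noncomputable def zetaV (F : Type*) [Field F] [Fintype F] (v : Polynomial F) (r : ℕ)
    (m : ℕ → ℕ) : Polynomial F :=
  ∑ᶠ i ∈ {i : Fin r → ℕ | StrictAnti i}, ∏ j : Fin r, powerSumV F v (i j) (m (j : ℕ))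

/-- `ζ⋆_v(-m_1, …, -m_r)`, the v-adic multiple zeta star value at nonpositive integers. -/
noncomputable def zetaVStar (F : Type*) [Field F] [Fintype F] (v : Polynomial F) (r : ℕ)
    (m : ℕ → ℕ) : Polynomial F :=
  ∑ᶠ i ∈ {i : Fin r → ℕ | Antitone i}, ∏ j : Fin r, powerSumV F v (i j) (m (j : ℕ))

/-- `ζ_{<d}(-m_1, …, -m_r)`, the truncated multiple zeta value:
the sum over `d > i_1 > ⋯ > i_r ≥ 0` of `S_{i_1}(-m_1) ⋯ S_{i_r}(-m_r)`. -/
noncomputable def zetaLt (F : Type*) [Field F] [Fintype F] (d r : ℕ) (m : ℕ → ℕ) :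
    Polynomial F :=
  ∑ᶠ i ∈ {i : Fin r → ℕ | StrictAnti i ∧ ∀ j, i j < d},
    ∏ j : Fin r, powerSum F (i j) (m (j : ℕ))

/-- `ζ⋆_{<d}(-m_1, …, -m_r)`, the truncated multiple zeta star value. -/
noncomputable def zetaLtStar (F : Type*) [Field F] [Fintype F] (d r : ℕ) (m : ℕ → ℕ) :
    Polynomial F :=
  ∑ᶠ i ∈ {i : Fin r → ℕ | Antitone i ∧ ∀ j, i j < d},
    ∏ j : Fin r, powerSum F (i j) (m (j : ℕ))

/-- `ζ_{<d}(-m)`, the depth-one truncated zeta value `Σ_{d > i ≥ 0} S_i(-m)`. -/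
noncomputable def zetaLtOne (F : Type*) [Field F] [Fintype F] (d m : ℕ) : Polynomial F :=
  ∑ᶠ i ∈ {i : ℕ | i < d}, powerSum F i m

/-! Write a monic `n` of degree `i ≥ d` with `n ≡ f (mod v)` as `n = v w + f` with `w` monic of
degree `i - d`. The binomial theorem turns the restricted sum into
`Σ_k C(m, k) f^(m-k) v^k S_{i-d}(k)`, where `S_e(k)` is the sum of the `k`-th powers of all monic
polynomials of degree `e`. Now `S_e(k) = 0` for `k < (q - 1) e` (write a monic polynomial as
`X h + c` and use `Σ_{c ∈ 𝔽_q} c^j = 0` for `j < q - 1`), while `S_e(k)` splits by residues mod `v`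
into restricted sums of degree `e`, which by strong induction on the degree are divisible by
`v ^ N(e)`, with `N = ordBound q d`. Since `N(i) ≤ k + N(i - d)` once `k ≥ (q - 1)(i - d)`, every
surviving term is divisible by `v ^ N(i)`. -/

open Finset

theorem Finset.sum_Icc_one_succ {M : Type*} [AddCommMonoid M] (g : ℕ → M) (n : ℕ) :
    ∑ j ∈ Icc 1 (n + 1), g j = g 1 + ∑ j ∈ Icc 1 n, g (j + 1) := by
  induction n with
  | zero => simp
  | succ n ih => rw [sum_Icc_succ_top (by omega), ih, sum_Icc_succ_top (by omega), add_assoc]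

theorem Finset.sum_sum_add_pow {ι κ R : Type*} [CommSemiring R] (s : Finset ι) (t : Finset κ)
    (x : ι → R) (y : κ → R) (m : ℕ) :
    ∑ a ∈ s, ∑ b ∈ t, (x a + y b) ^ m =
      ∑ k ∈ range (m + 1), (∑ a ∈ s, x a ^ k) * (∑ b ∈ t, y b ^ (m - k)) * m.choose k := by
  simp only [add_pow, sum_mul, mul_sum]
  refine (sum_congr rfl fun a _ => sum_comm).trans (sum_comm.trans ?_)
  exact sum_congr rfl fun k _ => sum_comm

def ordBound (q d i : ℕ) : ℕ :=
  (((q : ℤ) - 1) * ∑ j ∈ Icc 1 (i / d), ((i : ℤ) - j * d - 1)).toNat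

theorem ordBound_of_lt {q d i : ℕ} (h : i < d) : ordBound q d i = 0 := by
  simp [ordBound, Nat.div_eq_of_lt h]

theorem sum_Icc_one_div_sub_sub {d i : ℕ} (hd : 0 < d) (hdi : d ≤ i) :
    ∑ j ∈ Icc 1 (i / d), ((i : ℤ) - j * d - 1) =
      (i - d - 1) + ∑ j ∈ Icc 1 ((i - d) / d), (((i - d : ℕ) : ℤ) - j * d - 1) := by
  rw [Nat.div_eq_sub_div hd hdi, sum_Icc_one_succ, Nat.cast_sub hdi]
  push_cast
  congr 1
  · ring
  · exact sum_congr rfl fun j _ => by ring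

theorem ordBound_le_add {q d i k : ℕ} (hq : 1 ≤ q) (hd : 0 < d) (hdi : d ≤ i)
    (hk : (q - 1) * (i - d) ≤ k) : ordBound q d i ≤ k + ordBound q d (i - d) := by
  have hrest := Int.self_le_toNat
    (((q : ℤ) - 1) * ∑ j ∈ Icc 1 ((i - d) / d), (((i - d : ℕ) : ℤ) - j * d - 1))
  unfold ordBound
  rw [Int.toNat_le, sum_Icc_one_div_sub_sub hd hdi, mul_add]
  zify [hq, hdi] at hk
  push_cast
  nlinarith

open Polynomial

section PowerSum

variable {F : Type*} [Field F]

theorem finite_setOf_monic_natDegree_eq [Finite F] (i : ℕ) :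
    {n : F[X] | n.Monic ∧ n.natDegree = i}.Finite := by
  have : Finite (degreeLT F i) := Module.finite_of_finite F
  exact Set.finite_coe_iff.mp (Finite.of_equiv _ (monicEquivDegreeLT i).symm)

variable (F) in
noncomputable def monicsOfDegree [Finite F] (i : ℕ) : Finset F[X] :=
  (finite_setOf_monic_natDegree_eq i).toFinset

@[simp]
theorem mem_monicsOfDegree [Finite F] {i : ℕ} {n : F[X]} :
    n ∈ monicsOfDegree F i ↔ n.Monic ∧ n.natDegree = i :=
  Set.Finite.mem_toFinset _

theorem finsum_mem_setOf_monic_natDegree_eq [Finite F] {M : Type*} [AddCommMonoid M]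
    (i : ℕ) (g : F[X] → M) :
    ∑ᶠ n ∈ {n : F[X] | n.Monic ∧ n.natDegree = i}, g n = ∑ n ∈ monicsOfDegree F i, g n :=
  finsum_mem_eq_finite_toFinset_sum _ _

variable [Fintype F]

theorem powerSum_eq_sum (i k : ℕ) : powerSum F i k = ∑ n ∈ monicsOfDegree F i, n ^ k :=
  finsum_mem_setOf_monic_natDegree_eq i _

theorem powerSum_succ (e k : ℕ) :
    powerSum F (e + 1) k = ∑ h ∈ monicsOfDegree F e, ∑ c : F, (X * h + C c) ^ k := by
  rw [powerSum_eq_sum, ← sum_product']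
  refine (sum_nbij' (fun p : F[X] × F => X * p.1 + C p.2) (fun n => (divX n, n.coeff 0)) ?_ ?_ ?_ ?_
    fun _ _ => rfl).symm
  · rintro ⟨h, c⟩ hh
    simp only [mem_product, mem_univ, and_true, mem_monicsOfDegree] at hh ⊢
    have hXh : (X * h).natDegree = e + 1 := by rw [natDegree_X_mul hh.1.ne_zero, hh.2]
    have hc : (C c).degree < (X * h).degree :=
      degree_C_le.trans_lt (natDegree_pos_iff_degree_pos.mp (by omega))
    exact ⟨(monic_X.mul hh.1).add_of_left hc, (natDegree_add_eq_left_of_degree_lt hc).trans hXh⟩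
  · intro n hn
    simp only [mem_product, mem_univ, and_true, mem_monicsOfDegree] at hn ⊢
    have hdeg : n.divX.natDegree = e := by rw [natDegree_divX_eq_natDegree_tsub_one, hn.2]; rfl
    refine ⟨?_, hdeg⟩
    rw [Monic, leadingCoeff, hdeg, coeff_divX, ← hn.2]
    exact hn.1
  · rintro ⟨h, c⟩ -
    ext <;> simp [coeff_divX, coeff_X_mul]
  · exact fun n _ => X_mul_divX_add n

theorem powerSum_eq_zero_of_lt {e k : ℕ} (hk : k < (Fintype.card F - 1) * e) :
    powerSum F e k = 0 := by
  induction e generalizing k with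
  | zero => simp at hk
  | succ e ih =>
    rw [powerSum_succ, sum_sum_add_pow]
    refine sum_eq_zero fun a ha => ?_
    by_cases hka : k - a < Fintype.card F - 1
    · have hc : ∑ c : F, C c ^ (k - a) = 0 := by
        simp only [← map_pow, ← map_sum, FiniteField.sum_pow_lt_card_sub_one F _ hka, map_zero]
      rw [hc, mul_zero, zero_mul]
    · have ha : a < (Fintype.card F - 1) * e := by
        rw [mem_range] at ha
        rw [Nat.mul_succ] at hk
        omega
      have hh : ∑ h ∈ monicsOfDegree F e, (X * h) ^ a = 0 := by
        simp only [mul_pow, ← mul_sum, ← powerSum_eq_sum, ih ha, mul_zero]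
      rw [hh, zero_mul, zero_mul]

end PowerSum

theorem Polynomial.dvd_sub_iff_modByMonic_eq {R : Type*} [CommRing R] [Nontrivial R]
    {v g n : R[X]} (hv : v.Monic) (hg : g.degree < v.degree) : v ∣ n - g ↔ n %ₘ v = g := by
  rw [← modByMonic_eq_zero_iff_dvd hv, sub_modByMonic, (modByMonic_eq_self_iff hv).2 hg,
    sub_eq_zero]

section PowerSumCong

variable {F : Type*} [Field F]

noncomputable def powerSumCong (v f : F[X]) (i m : ℕ) : F[X] :=
  ∑ᶠ n ∈ {n : F[X] | n.Monic ∧ n.natDegree = i ∧ v ∣ n - f}, n ^ m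

theorem setOf_monic_natDegree_dvd_sub_eq_image {v f : F[X]} (hv : v.Monic)
    (hf : f.degree < v.degree) {i : ℕ} (hdi : v.natDegree ≤ i) :
    {n : F[X] | n.Monic ∧ n.natDegree = i ∧ v ∣ n - f} =
      (v * · + f) '' {w : F[X] | w.Monic ∧ w.natDegree = i - v.natDegree} := by
  have hfi : f.degree < i := hf.trans_le (degree_le_natDegree.trans (by exact_mod_cast hdi))
  ext n
  constructor
  · rintro ⟨hn, hni, w, hw⟩
    have hfn : f.degree < n.degree := by rwa [degree_eq_natDegree hn.ne_zero, hni]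
    have hvw : (v * w).Monic := hw ▸ hn.sub_of_left hfn
    have hwm : w.Monic := hv.of_mul_monic_left hvw
    have hvwi : (v * w).natDegree = i := by
      rw [← hw, natDegree_eq_of_degree_eq (degree_sub_eq_left_of_degree_lt hfn), hni]
    rw [natDegree_mul hv.ne_zero hwm.ne_zero] at hvwi
    exact ⟨w, ⟨hwm, by omega⟩, show v * w + f = n by rw [← hw, sub_add_cancel]⟩
  · rintro ⟨w, ⟨hw, hwi⟩, rfl⟩
    have hvw : (v * w).natDegree = i := by
      rw [natDegree_mul hv.ne_zero hw.ne_zero]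
      omega
    have hfvw : f.degree < (v * w).degree := by
      rwa [degree_eq_natDegree (hv.mul hw).ne_zero, hvw]
    refine ⟨(hv.mul hw).add_of_left hfvw, (natDegree_add_eq_left_of_degree_lt hfvw).trans hvw, ?_⟩
    simp

variable [Fintype F]

theorem powerSumCong_eq_sum_choose {v f : F[X]} (hv : v.Monic) (hf : f.degree < v.degree)
    {i : ℕ} (hdi : v.natDegree ≤ i) (m : ℕ) :
    powerSumCong v f i m = ∑ k ∈ range (m + 1),
      v ^ k * powerSum F (i - v.natDegree) k * f ^ (m - k) * m.choose k := by
  rw [powerSumCong, setOf_monic_natDegree_dvd_sub_eq_image hv hf hdi,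
    finsum_mem_image fun a _ b _ hab => mul_left_cancel₀ hv.ne_zero (add_right_cancel hab),
    finsum_mem_setOf_monic_natDegree_eq]
  calc ∑ w ∈ monicsOfDegree F (i - v.natDegree), (v * w + f) ^ m
      = ∑ w ∈ monicsOfDegree F (i - v.natDegree), ∑ g ∈ {f}, (v * w + g) ^ m := by
        simp only [sum_singleton]
    _ = _ := by
        rw [sum_sum_add_pow]
        simp only [sum_singleton, mul_pow, ← mul_sum, powerSum_eq_sum]

theorem dvd_powerSum_of_forall_dvd_powerSumCong {v a : F[X]} (hv : v.Monic) {i k : ℕ}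
    (h : ∀ g : F[X], g.degree < v.degree → a ∣ powerSumCong v g i k) : a ∣ powerSum F i k := by
  classical
  rw [powerSum_eq_sum, ← sum_fiberwise_of_maps_to (g := (· %ₘ v))
    (t := (monicsOfDegree F i).image (· %ₘ v)) fun n hn => mem_image_of_mem _ hn]
  refine dvd_sum fun g hg => ?_
  obtain ⟨n₀, -, rfl⟩ := mem_image.mp hg
  have hdeg := degree_modByMonic_lt n₀ hv
  convert h _ hdeg using 1
  rw [powerSumCong, ← finsum_mem_coe_finset]
  congr
  ext n
  simp [dvd_sub_iff_modByMonic_eq hv hdeg, and_assoc]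

end PowerSumCong

theorem pow_ordBound_dvd_powerSumCong {F : Type*} [Field F] [Fintype F] {v : F[X]}
    (hv : v.Monic) (hd : 0 < v.natDegree) (i : ℕ) {f : F[X]} (hf : f.degree < v.degree)
    (m : ℕ) : v ^ ordBound (Fintype.card F) v.natDegree i ∣ powerSumCong v f i m := by
  induction i using Nat.strong_induction_on generalizing f m with
  | _ i ih =>
  rcases lt_or_ge i v.natDegree with hi | hdi
  · rw [ordBound_of_lt hi, pow_zero]
    exact one_dvd _
  rw [powerSumCong_eq_sum_choose hv hf hdi]
  refine dvd_sum fun k _ => ?_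
  rcases lt_or_ge k ((Fintype.card F - 1) * (i - v.natDegree)) with hk | hk
  · rw [powerSum_eq_zero_of_lt hk, mul_zero, zero_mul, zero_mul]
    exact dvd_zero _
  have hS : v ^ ordBound (Fintype.card F) v.natDegree (i - v.natDegree) ∣
      powerSum F (i - v.natDegree) k :=
    dvd_powerSum_of_forall_dvd_powerSumCong hv fun g hg => ih _ (by omega) hg k
  calc v ^ ordBound (Fintype.card F) v.natDegree i
      ∣ v ^ (k + ordBound (Fintype.card F) v.natDegree (i - v.natDegree)) :=
        pow_dvd_pow v (ordBound_le_add Fintype.card_pos hd hdi hk)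
    _ ∣ v ^ k * powerSum F (i - v.natDegree) k := by
        rw [pow_add]
        exact mul_dvd_mul_left _ hS
    _ ∣ _ := dvd_mul_of_dvd_left (dvd_mul_right _ _) _

theorem ord_v_powerSum_general (F : Type*) [Field F] [Fintype F] (v : Polynomial F)
    (hv : v.Monic) (f : Polynomial F) (hfdeg : f.natDegree < v.natDegree) (i m : ℕ) :
    v ^ ((((Fintype.card F : ℤ) - 1) *
          ∑ j ∈ Finset.Icc 1 (i / v.natDegree),
            ((i : ℤ) - (j : ℤ) * (v.natDegree : ℤ) - 1)).toNat) ∣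
      ∑ᶠ n ∈ {n : Polynomial F | n.Monic ∧ n.natDegree = i ∧ v ∣ n - f}, n ^ m :=
  pow_ordBound_dvd_powerSumCong hv ((Nat.zero_le _).trans_lt hfdeg) i (degree_lt_degree hfdeg) m

/-- v-adic valuation estimate for restricted power sums (integer exponents): for nonzero
`f ∈ A` with `deg f < d`, the sum `P = Σ_{n ∈ A₊, deg n = i, n ≡ f mod v} n^m` is
divisible by `v^N`, where `N = max(0, (q-1)·Σ_{j=1}^{⌊i/d⌋} (i - jd - 1))`, the inner
sum being taken in `ℤ`. -/
theorem ord_v_powerSum (F : Type*) [Field F] [Fintype F] (v : Polynomial F)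
    (hv : v.Monic) (hvirr : Irreducible v) (hd : 0 < v.natDegree)
    (f : Polynomial F) (hf : f ≠ 0) (hfdeg : f.natDegree < v.natDegree) (i m : ℕ) :
    v ^ ((((Fintype.card F : ℤ) - 1) *
          ∑ j ∈ Finset.Icc 1 (i / v.natDegree),
            ((i : ℤ) - (j : ℤ) * (v.natDegree : ℤ) - 1)).toNat) ∣
      ∑ᶠ n ∈ {n : Polynomial F | n.Monic ∧ n.natDegree = i ∧ v ∣ n - f}, n ^ m :=
  ord_v_powerSum_general F v hv f hfdeg i m
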